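/- arXiv:2405.00785 — 3 statements merged into one kernel-verified Lean document; each statement's English description precedes it below -/
import Mathlib

section
/- Let H be a finite-dimensional complex inner product space, H a self-adjoint operator, Q any operator, and Ψ a unit vector with H Ψ = 0 and QΨ ≠ 0. Set |k⟩ = QΨ/‖QΨ‖ and ε = ⟨k|H|k⟩. Then the energy variance satisfies ⟨k|(H - ε)²|k⟩ = ⟨Ψ| [H,Q]† [H,Q] |Ψ⟩ / ‖QΨ‖² - ε². -/
/-! Expanding `(H - ε)²` and moving one `H` across the inner product, the variance of a
self-adjoint `H` in a unit vector `k` with `ε = ⟨k|H|k⟩` is `‖H k‖² - ε²`. Because `H Ψ = 0`,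
the commutator acts on `Ψ` as `[H,Q] Ψ = H Q Ψ`, so `⟨Ψ|[H,Q]†[H,Q]|Ψ⟩ = ‖H Q Ψ‖²`, which is
`‖Q Ψ‖² ‖H k‖²` for `k = Q Ψ / ‖Q Ψ‖`. -/

namespace ContinuousLinearMap

variable {𝕜 E : Type*} [RCLike 𝕜] [NormedAddCommGroup E] [InnerProductSpace 𝕜 E]
  [CompleteSpace E]

theorem IsSelfAdjoint.inner_sub_smul_one_comp_self_apply {T : E →L[𝕜] E} (hT : IsSelfAdjoint T)
    {x : E} (hx : ‖x‖ = 1) :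
    inner 𝕜 x (((T - inner 𝕜 x (T x) • 1) ∘L (T - inner 𝕜 x (T x) • 1)) x) =
      (‖T x‖ : 𝕜) ^ 2 - inner 𝕜 x (T x) ^ 2 := by
  have hTT : inner 𝕜 x (T (T x)) = (‖T x‖ : 𝕜) ^ 2 := by
    rw [← adjoint_inner_left, hT.adjoint_eq, inner_self_eq_norm_sq_to_K]
  have hxx : inner 𝕜 x x = (1 : 𝕜) := by
    rw [inner_self_eq_norm_sq_to_K, hx, RCLike.ofReal_one, one_pow]
  simp only [comp_apply, sub_apply, smul_apply, map_sub, map_smul, inner_sub_right,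
    inner_smul_right, one_apply_eq_self, hTT, hxx]
  ring

theorem inner_adjoint_comp_self_apply (A : E →L[𝕜] E) (x : E) :
    inner 𝕜 x ((adjoint A ∘L A) x) = (‖A x‖ : 𝕜) ^ 2 := by
  rw [comp_apply, adjoint_inner_right, inner_self_eq_norm_sq_to_K]

end ContinuousLinearMap

open ContinuousLinearMap

theorem stmt_2_general {V : Type*} [NormedAddCommGroup V] [InnerProductSpace ℂ V]
    [FiniteDimensional ℂ V]
    (H Q : V →L[ℂ] V) (hH : IsSelfAdjoint H)
    (Ψ : V) (hzero : H Ψ = 0) (hne : Q Ψ ≠ 0)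
    (kv : V) (hkv : kv = (‖Q Ψ‖ : ℂ)⁻¹ • Q Ψ)
    (ε : ℂ) (hε : ε = (inner ℂ kv (H kv) : ℂ))
    (C : V →L[ℂ] V) (hC : C = H ∘L Q - Q ∘L H) :
    (inner ℂ kv (((H - ε • (1 : V →L[ℂ] V)) ∘L (H - ε • (1 : V →L[ℂ] V))) kv) : ℂ) =
      (inner ℂ Ψ ((ContinuousLinearMap.adjoint C ∘L C) Ψ) : ℂ) / (‖Q Ψ‖ : ℂ) ^ 2
        - ε ^ 2 := by
  have hQΨ : ‖Q Ψ‖ ≠ 0 := norm_ne_zero_iff.mpr hne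
  have hkv_unit : ‖kv‖ = 1 := by
    rw [hkv, norm_smul, norm_inv, Complex.norm_real, norm_norm, inv_mul_cancel₀ hQΨ]
  have hCΨ : C Ψ = H (Q Ψ) := by simp [hC, hzero]
  have hHkv : ‖H kv‖ = ‖H (Q Ψ)‖ / ‖Q Ψ‖ := by
    rw [hkv, map_smul, norm_smul, norm_inv, Complex.norm_real, norm_norm, inv_mul_eq_div]
  subst hε
  rw [hH.inner_sub_smul_one_comp_self_apply hkv_unit, inner_adjoint_comp_self_apply, hCΨ, hHkv,
    RCLike.ofReal_eq_complex_ofReal, Complex.ofReal_div, div_pow]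

/-- Variance identity behind the quasi-Nambu-Goldstone theorem: with
`|k⟩ = QΨ/‖QΨ‖`, `ε = ⟨k|H|k⟩`, and `H Ψ = 0`,
`⟨k|(H-ε)²|k⟩ = ⟨Ψ| [H,Q]† [H,Q] |Ψ⟩ / ‖QΨ‖² - ε²`. -/
theorem stmt_2 {V : Type*} [NormedAddCommGroup V] [InnerProductSpace ℂ V]
    [FiniteDimensional ℂ V]
    (H Q : V →L[ℂ] V) (hH : IsSelfAdjoint H)
    (Ψ : V) (hΨ : ‖Ψ‖ = 1) (hzero : H Ψ = 0) (hne : Q Ψ ≠ 0)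
    (kv : V) (hkv : kv = (‖Q Ψ‖ : ℂ)⁻¹ • Q Ψ)
    (ε : ℂ) (hε : ε = (inner ℂ kv (H kv) : ℂ))
    (C : V →L[ℂ] V) (hC : C = H ∘L Q - Q ∘L H) :
    (inner ℂ kv (((H - ε • (1 : V →L[ℂ] V)) ∘L (H - ε • (1 : V →L[ℂ] V))) kv) : ℂ) =
      (inner ℂ Ψ ((ContinuousLinearMap.adjoint C ∘L C) Ψ) : ℂ) / (‖Q Ψ‖ : ℂ) ^ 2
        - ε ^ 2 :=
  stmt_2_general H Q hH Ψ hzero hne kv hkv ε hε C hC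
end

section
/- Let V be a finite-dimensional complex inner product space, ψ ∈ V a unit vector, q^+ an operator on V, and for N ≥ 1 and momentum k = 2πm/N with N ∤ m define the state |k⟩ = ∑_{j=1}^N e^{ikj} q_j^+ (ψ^{⊗N}), where q_j^+ acts on factor j. Then ‖|k⟩‖² = N·Δq², where Δq² = ⟨ψ| (q^+)† q^+ |ψ⟩ - |⟨ψ| q^+ |ψ⟩|². In particular the norm is independent of k (for nonzero k). -/
open Finset

noncomputable section

variable {ι : Type*} [Fintype ι] [DecidableEq ι]

/-- The `N`-fold product state `ψ ⊗ ψ ⊗ ⋯ ⊗ ψ`, realized concretely in the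
Hilbert space `ℓ²(ιᴺ) ≅ (ℂ^ι)^{⊗N}`. -/
def prodState {N : ℕ} (ψ : EuclideanSpace ℂ ι) : EuclideanSpace ℂ (Fin N → ι) :=
  WithLp.toLp 2 (fun x => ∏ i, ψ (x i))

/-- The operator `A` acting on tensor factor `j` (identity on the other factors),
realized concretely on `ℓ²(ιᴺ) ≅ (ℂ^ι)^{⊗N}` via the matrix elements of `A`. -/
def siteOp {N : ℕ} (A : EuclideanSpace ℂ ι →L[ℂ] EuclideanSpace ℂ ι) (j : Fin N) :
    EuclideanSpace ℂ (Fin N → ι) →L[ℂ] EuclideanSpace ℂ (Fin N → ι) :=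
  LinearMap.toContinuousLinearMap
    { toFun := fun f => WithLp.toLp 2 (fun x =>
        ∑ y : ι, A (EuclideanSpace.single y 1) (x j) * f (Function.update x j y))
      map_add' := by
        intro f g
        ext x
        simp [mul_add, Finset.sum_add_distrib]
      map_smul' := by
        intro c f
        ext x
        simp [Finset.mul_sum, mul_left_comm] }


/-!
Each `q⁺_j ψ^{⊗N}` is again a product vector, so inner products between them factor over the
sites; since `⟨ψ|ψ⟩ = 1`, their Gram matrix is `S = ‖q⁺ψ‖²` on the diagonal and
`C = |⟨ψ|q⁺|ψ⟩|²` off it. For such a Gram matrix `‖∑ c_j u_j‖² = (S - C) ∑ |c_j|² + C |∑ c_j|²`,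
and the phases `c_j = e^{ikj}` have modulus one and sum to zero, because `e^{ik}` is an `N`-th
root of unity different from `1`.
-/

section

variable {N : ℕ}

def prodVec (v : Fin N → EuclideanSpace ℂ ι) : EuclideanSpace ℂ (Fin N → ι) :=
  WithLp.toLp 2 (fun x => ∏ i, v i (x i))

omit [Fintype ι] [DecidableEq ι] in
lemma prodState_eq_prodVec (ψ : EuclideanSpace ℂ ι) :
    prodState (N := N) ψ = prodVec fun _ => ψ :=
  rfl

omit [DecidableEq ι] in
lemma inner_prodVec (v w : Fin N → EuclideanSpace ℂ ι) :
    inner ℂ (prodVec v) (prodVec w) = ∏ i, inner ℂ (v i) (w i) := by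
  simp only [prodVec, PiLp.inner_apply, RCLike.inner_apply, Finset.prod_univ_sum,
    Fintype.piFinset_univ, map_prod, ← Finset.prod_mul_distrib]

lemma EuclideanSpace.map_apply_eq_sum_single (A : EuclideanSpace ℂ ι →L[ℂ] EuclideanSpace ℂ ι)
    (v : EuclideanSpace ℂ ι) (x : ι) :
    A v x = ∑ y, v y * A (EuclideanSpace.single y 1) x := by
  conv_lhs => rw [← (EuclideanSpace.basisFun ι ℂ).sum_repr v]
  simp

lemma siteOp_prodVec (A : EuclideanSpace ℂ ι →L[ℂ] EuclideanSpace ℂ ι)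
    (v : Fin N → EuclideanSpace ℂ ι) (j : Fin N) :
    siteOp A j (prodVec v) = prodVec (Function.update v j (A (v j))) := by
  ext x
  change ∑ y, A (EuclideanSpace.single y 1) (x j) * ∏ i, v i (Function.update x j y i) =
    ∏ i, Function.update v j (A (v j)) i (x i)
  simp only [Function.apply_update (fun i (u : EuclideanSpace ℂ ι) => u (x i)),
    Function.apply_update (fun i (a : ι) => v i a), Finset.prod_update_of_mem (Finset.mem_univ j),
    EuclideanSpace.map_apply_eq_sum_single A (v j), Finset.sum_mul]
  exact Finset.sum_congr rfl fun y _ => by ring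

lemma inner_siteOp_prodState (A : EuclideanSpace ℂ ι →L[ℂ] EuclideanSpace ℂ ι)
    {ψ : EuclideanSpace ℂ ι} (hψ : ‖ψ‖ = 1) (j j' : Fin N) :
    inner ℂ (siteOp A j (prodState ψ)) (siteOp A j' (prodState ψ)) =
      if j = j' then inner ℂ (A ψ) (A ψ) else inner ℂ (A ψ) ψ * inner ℂ ψ (A ψ) := by
  rw [prodState_eq_prodVec, siteOp_prodVec, siteOp_prodVec, inner_prodVec]
  split_ifs with h
  · subst h
    rw [Fintype.prod_eq_single j fun i hi => by simp [Function.update_of_ne hi, hψ]]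
    simp
  · rw [Fintype.prod_eq_mul j j' h fun i hi => by
      simp [Function.update_of_ne hi.1, Function.update_of_ne hi.2, hψ]]
    simp [h, Ne.symm h]

lemma inner_sum_smul_self_of_inner_eq_ite {𝕜 E κ : Type*} [RCLike 𝕜] [NormedAddCommGroup E]
    [InnerProductSpace 𝕜 E] [Fintype κ] [DecidableEq κ] (u : κ → E) (c : κ → 𝕜) (S C : 𝕜)
    (hu : ∀ j j', inner 𝕜 (u j) (u j') = if j = j' then S else C) :
    inner 𝕜 (∑ j, c j • u j) (∑ j, c j • u j) =
      (S - C) * ∑ j, (‖c j‖ : 𝕜) ^ 2 + C * (‖∑ j, c j‖ : 𝕜) ^ 2 := by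
  open ComplexConjugate in
  calc inner 𝕜 (∑ j, c j • u j) (∑ j, c j • u j)
      = ∑ j, ∑ j', (C * (conj (c j) * c j') +
          if j = j' then (S - C) * (conj (c j) * c j) else 0) := by
        simp only [sum_inner, inner_smul_left]
        simp only [inner_sum, inner_smul_right, hu, Finset.mul_sum]
        refine Finset.sum_congr rfl fun j _ => Finset.sum_congr rfl fun j' _ => ?_
        split_ifs with h
        · subst h; ring
        · ring
    _ = (S - C) * ∑ j, conj (c j) * c j + C * (conj (∑ j, c j) * ∑ j, c j) := by
        simp only [Finset.sum_add_distrib, Finset.sum_ite_eq, Finset.mem_univ, if_true,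
          ← Finset.mul_sum, map_sum, Finset.sum_mul]
        ring
    _ = (S - C) * ∑ j, (‖c j‖ : 𝕜) ^ 2 + C * (‖∑ j, c j‖ : 𝕜) ^ 2 := by
        simp only [RCLike.conj_mul]

lemma Fin.sum_pow_succ_eq_zero_of_pow_eq_one {K : Type*} [Field K] {ζ : K} (hζN : ζ ^ N = 1)
    (hζ : ζ ≠ 1) :
    ∑ j : Fin N, ζ ^ ((j : ℕ) + 1) = 0 := by
  rw [Fin.sum_univ_eq_sum_range (fun j => ζ ^ (j + 1)) N]
  simp only [pow_succ', ← Finset.mul_sum, geom_sum_eq hζ, hζN, sub_self, zero_div, mul_zero]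

open Complex Real in
lemma sum_exp_momentum_eq_zero {m : ℤ} (hm : ¬ (N : ℤ) ∣ m) :
    ∑ j : Fin N, exp (I * ((2 * π * m / N : ℝ) : ℂ) * ((j : ℕ) + 1)) = 0 := by
  rcases eq_or_ne N 0 with rfl | hN
  · simp
  have hprim := Complex.isPrimitiveRoot_exp N hN
  have hζ : exp (I * ((2 * π * m / N : ℝ) : ℂ)) = exp (2 * π * I / N) ^ m := by
    rw [← Complex.exp_int_mul]; push_cast; ring_nf
  have hpow : ∀ j : Fin N, exp (I * ((2 * π * m / N : ℝ) : ℂ) * ((j : ℕ) + 1)) =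
      exp (I * ((2 * π * m / N : ℝ) : ℂ)) ^ ((j : ℕ) + 1) := fun j => by
    rw [← Complex.exp_nat_mul]; push_cast; ring_nf
  simp only [hpow]
  apply Fin.sum_pow_succ_eq_zero_of_pow_eq_one
  · rw [hζ, ← zpow_natCast, ← zpow_mul, mul_comm m, zpow_mul, zpow_natCast, hprim.pow_eq_one,
      one_zpow]
  · rwa [hζ, Ne, hprim.zpow_eq_one_iff_dvd]

end

theorem stmt_5_general {N : ℕ} (ψ : EuclideanSpace ℂ ι) (hψ : ‖ψ‖ = 1)
    (qp : EuclideanSpace ℂ ι →L[ℂ] EuclideanSpace ℂ ι)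
    (m : ℤ) (hm : ¬ (N : ℤ) ∣ m) (k : ℝ) (hk : k = 2 * Real.pi * m / N)
    (kv : EuclideanSpace ℂ (Fin N → ι))
    (hkv : kv = ∑ j : Fin N,
        Complex.exp (Complex.I * k * ((j : ℕ) + 1)) • siteOp qp j (prodState ψ)) :
    (‖kv‖ ^ 2 : ℂ) =
      (N : ℂ) * ((inner ℂ ψ ((ContinuousLinearMap.adjoint qp) (qp ψ)) : ℂ)
        - (‖(inner ℂ ψ (qp ψ) : ℂ)‖) ^ 2) := by
  have hphase : ∀ j : Fin N, ‖Complex.exp (Complex.I * k * ((j : ℕ) + 1))‖ = 1 := fun j => by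
    rw [show Complex.I * k * ((j : ℕ) + 1) = ((k * ((j : ℕ) + 1) : ℝ) : ℂ) * Complex.I by
      push_cast; ring]
    exact Complex.norm_exp_ofReal_mul_I _
  have hsum : ∑ j : Fin N, Complex.exp (Complex.I * k * ((j : ℕ) + 1)) = 0 :=
    hk ▸ sum_exp_momentum_eq_zero hm
  have hS : inner ℂ (qp ψ) (qp ψ) = inner ℂ ψ (ContinuousLinearMap.adjoint qp (qp ψ)) :=
    (ContinuousLinearMap.adjoint_inner_right qp ψ (qp ψ)).symm
  have hC : inner ℂ (qp ψ) ψ * inner ℂ ψ (qp ψ) = (‖(inner ℂ ψ (qp ψ) : ℂ)‖ : ℂ) ^ 2 := by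
    rw [← inner_conj_symm, Complex.conj_mul']
  rw [show (‖kv‖ : ℂ) ^ 2 = inner ℂ kv kv from (inner_self_eq_norm_sq_to_K kv).symm, hkv,
    inner_sum_smul_self_of_inner_eq_ite _ _ _ _ (inner_siteOp_prodState qp hψ), hsum, hS, hC]
  simp [hphase, mul_comm]

/-- Normalization of the quasi-Nambu-Goldstone mode
`|k⟩ = ∑_{j=1}^N e^{ikj} q_j^+ ψ^{⊗N}` at nonzero crystal momentum `k = 2πm/N`:
`‖|k⟩‖² = N Δq²` with `Δq² = ⟨ψ|(q⁺)† q⁺|ψ⟩ - |⟨ψ|q⁺|ψ⟩|²`; in particular the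
norm is independent of `k`. -/
theorem stmt_5 {N : ℕ} (hN : 1 ≤ N) (ψ : EuclideanSpace ℂ ι) (hψ : ‖ψ‖ = 1)
    (qp : EuclideanSpace ℂ ι →L[ℂ] EuclideanSpace ℂ ι)
    (m : ℤ) (hm : ¬ (N : ℤ) ∣ m) (k : ℝ) (hk : k = 2 * Real.pi * m / N)
    (kv : EuclideanSpace ℂ (Fin N → ι))
    (hkv : kv = ∑ j : Fin N,
        Complex.exp (Complex.I * k * ((j : ℕ) + 1)) • siteOp qp j (prodState ψ)) :
    (‖kv‖ ^ 2 : ℂ) =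
      (N : ℂ) * ((inner ℂ ψ ((ContinuousLinearMap.adjoint qp) (qp ψ)) : ℂ)
        - (‖(inner ℂ ψ (qp ψ) : ℂ)‖) ^ 2) :=
  stmt_5_general ψ hψ qp m hm k hk kv hkv

end
end

section
/- Consider a chain of N spin-s sites with periodic boundary conditions, lowest-weight product state |0⟩ = |-s⟩^{⊗N}, total raising operator S^+ = ∑_j s_j^+, and D^z_d = (i/2) ∑_j ( s_j^+ s_{j+d}^- - s_j^- s_{j+d}^+ ). Then for every n ≥ 0, D^z_d (S^+)^n |0⟩ = 0, i.e. D^z_d annihilates the entire ferromagnetic tower. -/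
open Finset
open Fin.NatCast

/-!
Write `S = ∑ sp l` and `C = ⁅D, S⁆`. Since `⁅sp, S⁆ = 0`, `⁅sm, S⁆ = -2 sz` and `⁅sz, S⁆ = sp` site by
site, the Leibniz rule gives `C = i ∑ (sz_j sp_{j+d} - sp_j sz_{j+d})` and then `⁅C, S⁆ = 0`. On the
lowest-weight state `D` vanishes because `sm` annihilates it, and `C` does because all `sz_j` have the
same eigenvalue there, so `C |0⟩` is `-i s ∑ (sp_{j+d} - sp_j)|0⟩ = 0` by translation invariance.
As `C` commutes with `S`, `D Sⁿ|0⟩ = S D Sⁿ⁻¹|0⟩ + Sⁿ⁻¹ C |0⟩` and induction concludes.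
-/

theorem Module.End.apply_pow_eq_zero_of_commute_lie {R M : Type*} [Semiring R] [AddCommGroup M]
    [Module R M] {D S : Module.End R M} {v : M} (hD : D v = 0) (hC : ⁅D, S⁆ v = 0)
    (hCS : Commute ⁅D, S⁆ S) (n : ℕ) : D ((S ^ n) v) = 0 := by
  have hDS : D * S = S * D + ⁅D, S⁆ := by rw [Ring.lie_def]; abel
  induction n with
  | zero => simpa using hD
  | succ n ih =>
    have hCn : ⁅D, S⁆ ((S ^ n) v) = 0 := by
      rw [← Module.End.mul_apply, (hCS.pow_right n).eq, Module.End.mul_apply, hC, map_zero]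
    rw [pow_succ', Module.End.mul_apply, ← Module.End.mul_apply D, hDS, LinearMap.add_apply,
      Module.End.mul_apply, ih, hCn, map_zero, add_zero]

section Commutator

attribute [local instance] LieRing.ofAssociativeRing

namespace Ring

variable {A : Type*} [Ring A]

theorem mul_lie (a b c : A) : ⁅a * b, c⁆ = a * ⁅b, c⁆ + ⁅a, c⁆ * b := by
  simp only [lie_def, mul_sub, sub_mul, mul_assoc]
  abel

theorem lie_sum_eq_of_commute {ι : Type*} [Fintype ι] {x : A} {f : ι → A} (j : ι)
    (h : ∀ l ≠ j, Commute x (f l)) : ⁅x, ∑ l, f l⁆ = ⁅x, f j⁆ := by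
  rw [lie_sum, Finset.sum_eq_single j (fun l _ hl => (h l hl).lie_eq) (by simp)]

end Ring

section SpinChain

variable {R A ι : Type*} [CommRing R] [Ring A] [Algebra R A] [Fintype ι]
  {sp sm sz : ι → A}
  (hcomm : ∀ j l, j ≠ l →
      ∀ a ∈ ({sp j, sm j, sz j} : Set A), ∀ b ∈ ({sp l, sm l, sz l} : Set A), Commute a b)
include hcomm

theorem lie_sum_raising_of_mem_site {j : ι} {x : A} (hx : x ∈ ({sp j, sm j, sz j} : Set A)) :
    ⁅x, ∑ l, sp l⁆ = ⁅x, sp j⁆ :=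
  Ring.lie_sum_eq_of_commute j fun l hl => hcomm j l hl.symm x hx (sp l) (by simp)

theorem raising_lie_sum_raising (j : ι) : ⁅sp j, ∑ l, sp l⁆ = 0 := by
  rw [lie_sum_raising_of_mem_site hcomm (j := j) (by simp), lie_self]

theorem lowering_lie_sum_raising (hpm : ∀ j, ⁅sp j, sm j⁆ = (2 : R) • sz j) (j : ι) :
    ⁅sm j, ∑ l, sp l⁆ = -((2 : R) • sz j) := by
  rw [lie_sum_raising_of_mem_site hcomm (j := j) (by simp), ← lie_skew, hpm]

theorem weight_lie_sum_raising (hzp : ∀ j, ⁅sz j, sp j⁆ = sp j) (j : ι) :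
    ⁅sz j, ∑ l, sp l⁆ = sp j := by
  rw [lie_sum_raising_of_mem_site hcomm (j := j) (by simp), hzp]

theorem lie_hopping_sum_raising (hpm : ∀ j, ⁅sp j, sm j⁆ = (2 : R) • sz j) (j k : ι) :
    ⁅sp j * sm k - sm j * sp k, ∑ l, sp l⁆ = (2 : R) • (sz j * sp k - sp j * sz k) := by
  rw [sub_lie, Ring.mul_lie, Ring.mul_lie, raising_lie_sum_raising hcomm,
    raising_lie_sum_raising hcomm, lowering_lie_sum_raising hcomm hpm,
    lowering_lie_sum_raising hcomm hpm, mul_neg, mul_smul_comm, neg_mul, smul_mul_assoc, smul_sub]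
  simp only [zero_mul, mul_zero, add_zero, zero_add]
  abel

theorem lie_current_sum_raising (hzp : ∀ j, ⁅sz j, sp j⁆ = sp j) (j k : ι) :
    ⁅sz j * sp k - sp j * sz k, ∑ l, sp l⁆ = 0 := by
  rw [sub_lie, Ring.mul_lie, Ring.mul_lie, raising_lie_sum_raising hcomm,
    raising_lie_sum_raising hcomm, weight_lie_sum_raising hcomm hzp,
    weight_lie_sum_raising hcomm hzp, mul_zero, zero_mul, zero_add, add_zero, sub_self]

end SpinChain

end Commutator

section LowestWeight

variable {R W ι : Type*} [CommRing R] [AddCommGroup W] [Module R W] [Fintype ι] [AddGroup ι]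
  {sp sm sz : ι → Module.End R W}
  (hcomm : ∀ j l, j ≠ l → ∀ a ∈ ({sp j, sm j, sz j} : Set (Module.End R W)),
      ∀ b ∈ ({sp l, sm l, sz l} : Set (Module.End R W)), Commute a b)
  {v : W}
include hcomm

theorem sum_hopping_apply_of_lowering_eq_zero (hlow : ∀ j, sm j v = 0) {e : ι} (he : e ≠ 0) :
    (∑ j, (sp j * sm (j + e) - sm j * sp (j + e))) v = 0 := by
  refine (LinearMap.sum_apply _ _ _).trans (Finset.sum_eq_zero fun j _ => ?_)
  have hsite : Commute (sm j) (sp (j + e)) :=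
    hcomm j (j + e) (add_ne_left.mpr he).symm _ (by simp) _ (by simp)
  rw [LinearMap.sub_apply, Module.End.mul_apply, hlow, map_zero, hsite.eq, Module.End.mul_apply,
    hlow, map_zero, sub_zero]

theorem sum_current_apply_of_weight_eq {c : R} (hwt : ∀ j, sz j v = c • v) {e : ι} (he : e ≠ 0) :
    (∑ j, (sz j * sp (j + e) - sp j * sz (j + e))) v = 0 := by
  have hterm (j : ι) : (sz j * sp (j + e) - sp j * sz (j + e)) v = c • (sp (j + e) v - sp j v) := by
    have hsite : Commute (sz j) (sp (j + e)) :=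
      hcomm j (j + e) (add_ne_left.mpr he).symm _ (by simp) _ (by simp)
    rw [LinearMap.sub_apply, hsite.eq, Module.End.mul_apply, Module.End.mul_apply, hwt, hwt,
      map_smul, map_smul, smul_sub]
  have hshift : ∑ j, sp (j + e) v = ∑ j, sp j v := Equiv.sum_comp (Equiv.addRight e) fun j => sp j v
  rw [LinearMap.sum_apply, Finset.sum_congr rfl fun j _ => hterm j, ← Finset.smul_sum,
    Finset.sum_sub_distrib, hshift, sub_self, smul_zero]

end LowestWeight

theorem stmt_11_general {W : Type*} [AddCommGroup W] [Module ℂ W] {N : ℕ} [NeZero N]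
    (s : ℝ) (sp sm sz : Fin N → Module.End ℂ W)
    (hzp : ∀ j, ⁅sz j, sp j⁆ = sp j)
    (hpm : ∀ j, ⁅sp j, sm j⁆ = (2 : ℂ) • sz j)
    (hcomm : ∀ j l, j ≠ l →
      ∀ a ∈ ({sp j, sm j, sz j} : Set (Module.End ℂ W)),
      ∀ b ∈ ({sp l, sm l, sz l} : Set (Module.End ℂ W)), Commute a b)
    (v0 : W) (hlow : ∀ j, sm j v0 = 0) (hwt : ∀ j, sz j v0 = (-(s : ℂ)) • v0)
    (d : ℕ) (hd1 : 1 ≤ d) (hdN : d < N)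
    (Dz Splus : Module.End ℂ W)
    (hDz : Dz = (Complex.I / 2) •
      ∑ j : Fin N, (sp j * sm (j + (d : Fin N)) - sm j * sp (j + (d : Fin N))))
    (hS : Splus = ∑ j : Fin N, sp j) :
    ∀ n : ℕ, Dz ((Splus ^ n) v0) = 0 := by
  let _ : LieRing (Module.End ℂ W) := LieRing.ofAssociativeRing
  have hd : (d : Fin N) ≠ 0 := by
    rw [Ne, Fin.natCast_eq_zero]
    exact fun h => (Nat.eq_zero_of_dvd_of_lt h hdN).not_gt hd1
  have hDS : ⁅Dz, Splus⁆ = Complex.I • ∑ j : Fin N, (sz j * sp (j + d) - sp j * sz (j + d)) := by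
    simp only [hDz, hS, smul_lie, sum_lie, lie_hopping_sum_raising hcomm hpm, ← Finset.smul_sum,
      smul_smul, div_mul_cancel₀ Complex.I two_ne_zero]
  have hCS : Commute ⁅Dz, Splus⁆ Splus := by
    rw [commute_iff_lie_eq, hDS, smul_lie, sum_lie, hS]
    simp only [lie_current_sum_raising hcomm hzp, Finset.sum_const_zero, smul_zero]
  refine Module.End.apply_pow_eq_zero_of_commute_lie ?_ ?_ hCS
  · rw [hDz, LinearMap.smul_apply, sum_hopping_apply_of_lowering_eq_zero hcomm hlow hd, smul_zero]
  · rw [hDS, LinearMap.smul_apply, sum_current_apply_of_weight_eq hcomm hwt hd, smul_zero]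

/-- `D^z_d` annihilates the whole ferromagnetic tower: on a periodic chain of `N`
spin-`s` sites with lowest-weight product state `|0⟩` (`s_j⁻|0⟩ = 0`,
`s_j^z|0⟩ = -s|0⟩`), for every `n ≥ 0`, `D^z_d (S⁺)ⁿ |0⟩ = 0`. -/
theorem stmt_11 {W : Type*} [AddCommGroup W] [Module ℂ W] {N : ℕ} [NeZero N]
    (s : ℝ) (sp sm sz : Fin N → Module.End ℂ W)
    (hzp : ∀ j, ⁅sz j, sp j⁆ = sp j)
    (hzm : ∀ j, ⁅sz j, sm j⁆ = -sm j)
    (hpm : ∀ j, ⁅sp j, sm j⁆ = (2 : ℂ) • sz j)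
    (hcomm : ∀ j l, j ≠ l →
      ∀ a ∈ ({sp j, sm j, sz j} : Set (Module.End ℂ W)),
      ∀ b ∈ ({sp l, sm l, sz l} : Set (Module.End ℂ W)), Commute a b)
    (v0 : W) (hlow : ∀ j, sm j v0 = 0) (hwt : ∀ j, sz j v0 = (-(s : ℂ)) • v0)
    (d : ℕ) (hd1 : 1 ≤ d) (hdN : d < N)
    (Dz Splus : Module.End ℂ W)
    (hDz : Dz = (Complex.I / 2) •
      ∑ j : Fin N, (sp j * sm (j + (d : Fin N)) - sm j * sp (j + (d : Fin N))))
    (hS : Splus = ∑ j : Fin N, sp j) :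
    ∀ n : ℕ, Dz ((Splus ^ n) v0) = 0 :=
  stmt_11_general s sp sm sz hzp hpm hcomm v0 hlow hwt d hd1 hdN Dz Splus hDz hS
end
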